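/- Let 0 ≤ ε < 2 and let (ξ, η) : ℝ → ℝ² be a differentiable solution of the reduced Pikovsky–Topaj system with ξ(0) = 0. Then ξ(t) = 0 for all t ∈ ℝ. (In other words, the line ξ = 0 is invariant under the dynamics.) -/

import Mathlib

open Real

/-! The ξ-equation reads ξ' = c(t) sin ξ with |c(t)| ≤ 2ε / (2 - ε), because the denominator
2 + ε cos(t − η) stays above 2 − ε > 0. For a fixed η the right-hand side is therefore globally
Lipschitz in ξ, uniformly in t, and vanishes at ξ = 0; so ξ ≡ 0 is a solution, and by uniqueness
for Lipschitz ODEs it is the only one through ξ(0) = 0, forward and backward in time. -/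

/-- `(ξ, η)` is a solution of the reduced (nonautonomous) Pikovsky–Topaj system
`ξ' = 2ε sin ξ sin η / (2 + ε cos(t − η))`,
`η' = (1 − ε cos(t − η) − 2ε cos ξ cos η) / (2 + ε cos(t − η))`. -/
def IsReducedPTSol (ε : ℝ) (ξ η : ℝ → ℝ) : Prop :=
  ∀ t : ℝ,
    HasDerivAt ξ
      (2 * ε * Real.sin (ξ t) * Real.sin (η t) / (2 + ε * Real.cos (t - η t))) t ∧
    HasDerivAt η
      ((1 - ε * Real.cos (t - η t) - 2 * ε * Real.cos (ξ t) * Real.cos (η t)) /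
        (2 + ε * Real.cos (t - η t))) t

noncomputable def reducedPTXiField (ε : ℝ) (η : ℝ → ℝ) (t x : ℝ) : ℝ :=
  2 * ε * sin x * sin (η t) / (2 + ε * cos (t - η t))

lemma reducedPTXiField_zero (ε : ℝ) (η : ℝ → ℝ) (t : ℝ) : reducedPTXiField ε η t 0 = 0 := by
  simp [reducedPTXiField]

lemma sub_le_add_mul_cos {ε : ℝ} (hε : 0 ≤ ε) (a x : ℝ) : a - ε ≤ a + ε * cos x := by
  nlinarith [neg_one_le_cos x]

lemma abs_two_mul_sin_div_two_add_mul_cos_le {ε : ℝ} (hε₀ : 0 ≤ ε) (hε₂ : ε < 2) (y z : ℝ) :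
    |2 * ε * sin y / (2 + ε * cos z)| ≤ 2 * ε / (2 - ε) := by
  have hden : 2 - ε ≤ 2 + ε * cos z := sub_le_add_mul_cos hε₀ 2 z
  have hnum : |2 * ε * sin y| ≤ 2 * ε := by
    rw [abs_mul, abs_of_nonneg (by positivity : 0 ≤ 2 * ε)]
    exact mul_le_of_le_one_right (by positivity) (abs_sin_le_one y)
  rw [abs_div, abs_of_pos (by linarith : 0 < 2 + ε * cos z)]
  exact div_le_div₀ (by positivity) hnum (by linarith) hden

lemma lipschitzWith_reducedPTXiField {ε : ℝ} (hε₀ : 0 ≤ ε) (hε₂ : ε < 2) (η : ℝ → ℝ) (t : ℝ) :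
    LipschitzWith (2 * ε / (2 - ε)).toNNReal (reducedPTXiField ε η t) := by
  set c := 2 * ε * sin (η t) / (2 + ε * cos (t - η t))
  have hfield : reducedPTXiField ε η t = fun x => c • sin x := by
    funext x
    simp only [reducedPTXiField, c, smul_eq_mul]
    ring
  rw [hfield]
  refine ((lipschitzWith_smul c).comp lipschitzWith_sin).weaken ?_
  rw [mul_one, Real.le_toNNReal_iff_coe_le (by positivity), coe_nnnorm, Real.norm_eq_abs]
  exact abs_two_mul_sin_div_two_add_mul_cos_le hε₀ hε₂ _ _

/-- The line `ξ = 0` is invariant under the dynamics of the reduced Pikovsky–Topaj system. -/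
theorem reducedPT_invariant_line (ε : ℝ) (hε₀ : 0 ≤ ε) (hε₂ : ε < 2) (ξ η : ℝ → ℝ)
    (h : IsReducedPTSol ε ξ η) (h0 : ξ 0 = 0) :
    ∀ t : ℝ, ξ t = 0 := by
  have hzero :
      ∀ t, HasDerivAt (fun _ => (0 : ℝ)) (reducedPTXiField ε η t 0) t ∧ (0 : ℝ) ∈ Set.univ :=
    fun t => ⟨by rw [reducedPTXiField_zero]; exact hasDerivAt_const t 0, trivial⟩
  have hξ : ξ = fun _ => 0 :=
    ODE_solution_unique_univ (s := fun _ => Set.univ)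
      (fun t => (lipschitzWith_reducedPTXiField hε₀ hε₂ η t).lipschitzOnWith)
      (fun t => ⟨(h t).1, trivial⟩) hzero h0
  exact congrFun hξ
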